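/- Let F = K * L be the free product of two groups and φ : F → K × L the natural epimorphism. For every c ≥ 1, the kernel of the induced map φ̄_c : F/γ_{c+1}(F) → (K/γ_{c+1}(K)) × (L/γ_{c+1}(L)) is isomorphic to [K, L]^F / [K, L, _{c-1} F]^F, i.e., the image of the normal closure of [K, L] in F modulo its intersection with γ_{c+1}(F), where [K, L, _{c-1} F]^F denotes the normal closure of the (c-1)-fold iterated commutator subgroup [[K,L],F,...,F]. -/

import Mathlib

open Monoid Coprod

/-- The natural epimorphism `K ∗ L →* K × L`. -/
noncomputable def natProj (K L : Type*) [Group K] [Group L] :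
    (K ∗ L) →* K × L :=
  Monoid.Coprod.lift (MonoidHom.inl K L) (MonoidHom.inr K L)

/-- `[K, L, _m F]^F` : the normal closure in `F = K ∗ L` of the left-normed iterated
commutator subgroup `[[K,L],F,…,F]` (`m` copies of `F`), where `K`, `L` are identified
with their canonical images in `F`. -/
noncomputable def iterComm (K L : Type*) [Group K] [Group L] : ℕ → Subgroup (K ∗ L)
  | 0 => Subgroup.normalClosure
      (⁅((Coprod.inl : K →* K ∗ L).range), ((Coprod.inr : L →* K ∗ L).range)⁆ : Subgroup (K ∗ L))
  | m + 1 => Subgroup.normalClosure (⁅iterComm K L m, (⊤ : Subgroup (K ∗ L))⁆ : Subgroup (K ∗ L))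

instance (K L : Type*) [Group K] [Group L] (m : ℕ) : (iterComm K L m).Normal := by
  cases m <;> [exact Subgroup.normalClosure_normal; exact Subgroup.normalClosure_normal]

/-!
Write `D n = [K, L, _n F]^F` and recall that Mathlib's `lowerCentralSeries n` is `γ_{n+1}`.
Since `[K, L] ≤ D 0` and `[D n, F] ≤ D (n+1)`, the three subgroups lemma gives
`[γ_{n+1} K, L] ≤ D n` and `[γ_{n+1} L, K] ≤ D n`. Hence, modulo `D n`, the subgroups `γ_{n+2} K`
and `γ_{n+2} L` commute and are normalised by the generators `K`, `L` of `F`, and induction on `n`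
gives `γ_{n+2} F ⊆ γ_{n+2} K · γ_{n+2} L · D n`. An element of `[K, L]^F`, the kernel of
`F → K × L`, written in this form has trivial `K`- and `L`-factors, so
`[K, L]^F ∩ γ_{n+2} F = D n`. Finally the kernel of `φ̄_c` is the image of `[K, L]^F` in
`F / γ_{c+1} F`, that is `[K, L]^F / ([K, L]^F ∩ γ_{c+1} F)`.
-/

namespace Subgroup

section Normal

variable {G : Type*} [Group G] {N : Subgroup G} [N.Normal] {H₁ H₂ H₃ : Subgroup G}

theorem commutator_le_iff_map_le_centralizer :
    ⁅H₁, H₂⁆ ≤ N ↔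
      H₁.map (QuotientGroup.mk' N) ≤ centralizer (H₂.map (QuotientGroup.mk' N)) := by
  rw [← commutator_eq_bot_iff_le_centralizer, ← map_commutator, map_eq_bot_iff,
    QuotientGroup.ker_mk']

theorem sup_commutator_le (h₁ : ⁅H₁, H₃⁆ ≤ N) (h₂ : ⁅H₂, H₃⁆ ≤ N) :
    ⁅H₁ ⊔ H₂, H₃⁆ ≤ N := by
  rw [commutator_le_iff_map_le_centralizer, map_sup]
  exact sup_le (commutator_le_iff_map_le_centralizer.mp h₁)
    (commutator_le_iff_map_le_centralizer.mp h₂)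

theorem commutator_sup_le (h₁ : ⁅H₁, H₂⁆ ≤ N) (h₂ : ⁅H₁, H₃⁆ ≤ N) :
    ⁅H₁, H₂ ⊔ H₃⁆ ≤ N := by
  rw [commutator_comm] at h₁ h₂ ⊢
  exact sup_commutator_le h₁ h₂

/-- The three subgroups lemma modulo a normal subgroup. -/
theorem commutator_commutator_le_of_rotate (h₁ : ⁅⁅H₂, H₃⁆, H₁⁆ ≤ N)
    (h₂ : ⁅⁅H₃, H₁⁆, H₂⁆ ≤ N) : ⁅⁅H₁, H₂⁆, H₃⁆ ≤ N := by
  have key : ∀ A B C : Subgroup G, ⁅⁅A, B⁆, C⁆ ≤ N ↔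
      ⁅⁅A.map (QuotientGroup.mk' N), B.map (QuotientGroup.mk' N)⁆,
        C.map (QuotientGroup.mk' N)⁆ = ⊥ := fun A B C => by
    rw [← map_commutator, ← map_commutator, map_eq_bot_iff, QuotientGroup.ker_mk']
  rw [key] at h₁ h₂ ⊢
  exact commutator_commutator_eq_bot_of_rotate h₁ h₂

theorem exists_mul_mul_eq_of_mem_sup (h : ⁅H₁, H₂⁆ ≤ N) {x : G} (hx : x ∈ H₁ ⊔ H₂ ⊔ N) :
    ∃ a ∈ H₁, ∃ b ∈ H₂, ∃ d ∈ N, a * b * d = x := by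
  set π := QuotientGroup.mk' N
  have hπx : π x ∈ ((H₁.map π ⊔ H₂.map π : Subgroup (G ⧸ N)) : Set (G ⧸ N)) := by
    rw [← map_sup, SetLike.mem_coe, ← mem_comap, comap_map_eq, QuotientGroup.ker_mk']
    exact hx
  have hnorm : H₁.map π ≤ normalizer (H₂.map π : Set (G ⧸ N)) :=
    (commutator_le_iff_map_le_centralizer.mp h).trans (centralizer_le_normalizer _)
  rw [coe_mul_of_left_le_normalizer_right _ _ hnorm] at hπx
  obtain ⟨_, ⟨a, ha, rfl⟩, _, ⟨b, hb, rfl⟩, hab⟩ := hπx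
  refine ⟨a, ha, b, hb, (a * b)⁻¹ * x, QuotientGroup.eq.mp ?_, mul_inv_cancel_left _ _⟩
  simpa [π] using hab

theorem normal_map_mk'_of_le_normalizer {A : Subgroup G} (hG : H₁ ⊔ H₂ = ⊤)
    (hA : H₁ ≤ normalizer (A : Set G)) (hAH : ⁅A, H₂⁆ ≤ N) :
    (A.map (QuotientGroup.mk' N)).Normal := by
  rw [← normalizer_eq_top_iff, eq_top_iff,
    ← map_top_of_surjective _ (QuotientGroup.mk'_surjective N), ← hG, map_sup]
  rw [commutator_comm, commutator_le_iff_map_le_centralizer] at hAH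
  exact sup_le ((map_mono hA).trans (le_normalizer_map _))
    (hAH.trans (centralizer_le_normalizer _))

theorem normal_sup_sup_of_le_normalizer {A B : Subgroup G} (hG : H₁ ⊔ H₂ = ⊤)
    (hA : H₁ ≤ normalizer (A : Set G)) (hAH : ⁅A, H₂⁆ ≤ N)
    (hB : H₂ ≤ normalizer (B : Set G)) (hBH : ⁅B, H₁⁆ ≤ N) : (A ⊔ B ⊔ N).Normal := by
  have := normal_map_mk'_of_le_normalizer hG hA hAH
  have := normal_map_mk'_of_le_normalizer (sup_comm H₁ H₂ ▸ hG) hB hBH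
  rw [← QuotientGroup.ker_mk' N, ← comap_map_eq, map_sup]
  infer_instance

end Normal

theorem map_mem_lowerCentralSeries {G G' : Type*} [Group G] [Group G'] (f : G →* G')
    {n : ℕ} {g : G} (hg : g ∈ (⊤ : Subgroup G).lowerCentralSeries n) :
    f g ∈ (⊤ : Subgroup G').lowerCentralSeries n :=
  lowerCentralSeries_mono n le_top (map_lowerCentralSeries ⊤ f n ▸ mem_map_of_mem f hg)

section Series

variable {G : Type*} [Group G] {H₁ H₂ : Subgroup G} {D : ℕ → Subgroup G} [∀ n, (D n).Normal]

theorem commutator_lowerCentralSeries_le (hD : ∀ n, ⁅D n, ⊤⁆ ≤ D (n + 1)) (i j : ℕ) :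
    ⁅D i, (⊤ : Subgroup G).lowerCentralSeries j⁆ ≤ D (i + j + 1) := by
  induction j generalizing i with
  | zero => exact hD i
  | succ j ih =>
    rw [lowerCentralSeries_succ, commutator_comm]
    apply commutator_commutator_le_of_rotate
    · rw [commutator_comm ⊤]
      refine (commutator_mono (hD i) le_rfl).trans ?_
      convert ih (i + 1) using 2
      omega
    · exact (commutator_mono (ih i) le_rfl).trans (hD _)

theorem lowerCentralSeries_commutator_le (hD : ∀ n, ⁅D n, ⊤⁆ ≤ D (n + 1))
    (h₀ : ⁅H₁, H₂⁆ ≤ D 0) (n : ℕ) : ⁅H₁.lowerCentralSeries n, H₂⁆ ≤ D n := by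
  induction n with
  | zero => exact h₀
  | succ n ih =>
    rw [lowerCentralSeries_succ]
    apply commutator_commutator_le_of_rotate
    · calc ⁅⁅H₁, H₂⁆, H₁.lowerCentralSeries n⁆
          ≤ ⁅D 0, (⊤ : Subgroup G).lowerCentralSeries n⁆ :=
            commutator_mono h₀ (lowerCentralSeries_mono n le_top)
        _ ≤ D (0 + n + 1) := commutator_lowerCentralSeries_le hD 0 n
        _ = D (n + 1) := by rw [zero_add]
    · rw [commutator_comm H₂]
      exact (commutator_mono ih le_top).trans (hD n)

theorem commutator_top_le_sup (hG : H₁ ⊔ H₂ = ⊤) (hD : ∀ n, ⁅D n, ⊤⁆ ≤ D (n + 1))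
    (h₀ : ⁅H₁, H₂⁆ ≤ D 0) (n : ℕ) {E : Subgroup G} (hE : ⁅E, ⊤⁆ ≤ D n) :
    ⁅H₁.lowerCentralSeries n ⊔ H₂.lowerCentralSeries n ⊔ E, ⊤⁆ ≤
      H₁.lowerCentralSeries (n + 1) ⊔ H₂.lowerCentralSeries (n + 1) ⊔ D n := by
  have hH₁ : ⁅H₁.lowerCentralSeries n, H₂⁆ ≤ D n := lowerCentralSeries_commutator_le hD h₀ n
  have hH₂ : ⁅H₂.lowerCentralSeries n, H₁⁆ ≤ D n :=
    lowerCentralSeries_commutator_le hD (commutator_comm H₁ H₂ ▸ h₀) n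
  have hsucc : ∀ {H H' : Subgroup G}, ⁅H.lowerCentralSeries n, H'⁆ ≤ D n →
      ⁅H.lowerCentralSeries (n + 1), H'⁆ ≤ D n := fun h =>
    (commutator_mono (lowerCentralSeries_antitone _ n.le_succ) le_rfl).trans h
  -- normality lets us test commutators against the generators `H₁`, `H₂` of `⊤` only
  have := normal_sup_sup_of_le_normalizer hG (self_le_normalizer_lowerCentralSeries _ _)
    (hsucc hH₁) (self_le_normalizer_lowerCentralSeries _ _) (hsucc hH₂)
  have hDT : D n ≤ H₁.lowerCentralSeries (n + 1) ⊔ H₂.lowerCentralSeries (n + 1) ⊔ D n :=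
    le_sup_right
  refine sup_commutator_le (sup_commutator_le ?_ ?_) (hE.trans hDT) <;> rw [← hG] <;>
    refine commutator_sup_le ?_ ?_
  · exact le_sup_left.trans le_sup_left
  · exact hH₁.trans hDT
  · exact hH₂.trans hDT
  · exact le_sup_right.trans le_sup_left

theorem lowerCentralSeries_succ_le_sup (hG : H₁ ⊔ H₂ = ⊤) (hD : ∀ n, ⁅D n, ⊤⁆ ≤ D (n + 1))
    (h₀ : ⁅H₁, H₂⁆ ≤ D 0) (n : ℕ) :
    (⊤ : Subgroup G).lowerCentralSeries (n + 1) ≤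
      H₁.lowerCentralSeries (n + 1) ⊔ H₂.lowerCentralSeries (n + 1) ⊔ D n := by
  induction n with
  | zero => simpa [hG] using commutator_top_le_sup hG hD h₀ 0 (E := ⊥) (by simp)
  | succ n ih =>
    exact (commutator_mono ih le_rfl).trans (commutator_top_le_sup hG hD h₀ (n + 1) (hD n))

end Series

end Subgroup

namespace Monoid.Coprod

variable {K L : Type*} [Group K] [Group L]

theorem ker_toProd_inf_sup_le {A B D : Subgroup (K ∗ L)} [D.Normal]
    (hA : A ≤ (inl : K →* K ∗ L).range) (hB : B ≤ (inr : L →* K ∗ L).range) (hAB : ⁅A, B⁆ ≤ D)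
    (hD : D ≤ (toProd : K ∗ L →* K × L).ker) :
    (toProd : K ∗ L →* K × L).ker ⊓ (A ⊔ B ⊔ D) ≤ D := by
  rintro x ⟨hx, hxABD⟩
  obtain ⟨_, ha, _, hb, d, hd, rfl⟩ := Subgroup.exists_mul_mul_eq_of_mem_sup hAB hxABD
  obtain ⟨u, rfl⟩ := hA ha
  obtain ⟨v, rfl⟩ := hB hb
  obtain ⟨rfl, rfl⟩ : u = 1 ∧ v = 1 := by simpa [MonoidHom.mem_ker.mp (hD hd)] using hx
  simpa using hd

end Monoid.Coprod

section IterComm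

open Subgroup

variable (K L : Type*) [Group K] [Group L]

theorem natProj_eq_toProd : natProj K L = toProd := rfl

theorem iterComm_succ (m : ℕ) : iterComm K L (m + 1) = ⁅iterComm K L m, ⊤⁆ :=
  normalClosure_eq_self _

theorem iterComm_antitone : Antitone (iterComm K L) :=
  antitone_nat_of_succ_le fun m => (iterComm_succ K L m).trans_le (commutator_le_left _ _)

theorem commutator_iterComm_top_le (m : ℕ) : ⁅iterComm K L m, ⊤⁆ ≤ iterComm K L (m + 1) :=
  (iterComm_succ K L m).ge

theorem commutator_range_inl_range_inr_le :
    ⁅(inl : K →* K ∗ L).range, (inr : L →* K ∗ L).range⁆ ≤ iterComm K L 0 :=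
  le_normalClosure

theorem iterComm_le_lowerCentralSeries (m : ℕ) :
    iterComm K L m ≤ (⊤ : Subgroup (K ∗ L)).lowerCentralSeries (m + 1) := by
  induction m with
  | zero => exact normalClosure_le_normal (commutator_mono le_top le_top)
  | succ m ih => exact (iterComm_succ K L m).trans_le (commutator_mono ih le_rfl)

theorem ker_toProd_eq_iterComm_zero : (toProd : K ∗ L →* K × L).ker = iterComm K L 0 := by
  have hle : iterComm K L 0 ≤ (toProd : K ∗ L →* K × L).ker := by
    refine normalClosure_le_normal (commutator_le.mpr ?_)
    rintro _ ⟨k, rfl⟩ _ ⟨l, rfl⟩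
    simp [commutatorElement_def]
  refine le_antisymm ?_ hle
  simpa using ker_toProd_inf_sup_le le_rfl le_rfl (commutator_range_inl_range_inr_le K L) hle

theorem iterComm_zero_inf_lowerCentralSeries_succ_le (n : ℕ) :
    iterComm K L 0 ⊓ (⊤ : Subgroup (K ∗ L)).lowerCentralSeries (n + 1) ≤ iterComm K L n := by
  have hsup := lowerCentralSeries_succ_le_sup range_inl_sup_range_inr
    (commutator_iterComm_top_le K L) (commutator_range_inl_range_inr_le K L) n
  have hcomm : ⁅(inl : K →* K ∗ L).range.lowerCentralSeries (n + 1),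
      (inr : L →* K ∗ L).range.lowerCentralSeries (n + 1)⁆ ≤ iterComm K L n :=
    (commutator_mono (Subgroup.lowerCentralSeries_antitone _ n.le_succ)
        (lowerCentralSeries_le_self _ _)).trans
      (lowerCentralSeries_commutator_le (commutator_iterComm_top_le K L)
        (commutator_range_inl_range_inr_le K L) n)
  rw [← ker_toProd_eq_iterComm_zero]
  refine (inf_le_inf_left _ hsup).trans (ker_toProd_inf_sup_le (lowerCentralSeries_le_self _ _)
    (lowerCentralSeries_le_self _ _) hcomm ?_)
  exact ker_toProd_eq_iterComm_zero K L ▸ iterComm_antitone K L n.zero_le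

theorem iterComm_zero_inf_lowerCentralSeries (c : ℕ) :
    iterComm K L 0 ⊓ (⊤ : Subgroup (K ∗ L)).lowerCentralSeries c = iterComm K L (c - 1) := by
  cases c with
  -- here `c - 1 = 0` in `ℕ` and `lowerCentralSeries 0 = ⊤`, so both sides are `[K, L]^F`
  | zero => simp
  | succ n =>
    exact le_antisymm (iterComm_zero_inf_lowerCentralSeries_succ_le K L n)
      (le_inf (iterComm_antitone K L n.zero_le) (iterComm_le_lowerCentralSeries K L n))

end IterComm

section InducedMap

variable {K L : Type*} [Group K] [Group L] {c : ℕ}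
  {φbar : (K ∗ L) ⧸ (⊤ : Subgroup (K ∗ L)).lowerCentralSeries c →*
    (K ⧸ (⊤ : Subgroup K).lowerCentralSeries c) × (L ⧸ (⊤ : Subgroup L).lowerCentralSeries c)}

theorem mk_mem_ker_of_mem_iterComm_zero
    (hφbar : ∀ x : K ∗ L, φbar (QuotientGroup.mk x) =
      (QuotientGroup.mk (natProj K L x).1, QuotientGroup.mk (natProj K L x).2))
    {z : K ∗ L} (hz : z ∈ iterComm K L 0) : (z : (K ∗ L) ⧸ _) ∈ φbar.ker := by
  rw [← ker_toProd_eq_iterComm_zero, MonoidHom.mem_ker] at hz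
  simp [hφbar, natProj_eq_toProd, hz]

theorem exists_mem_iterComm_zero_mk_eq
    (hφbar : ∀ x : K ∗ L, φbar (QuotientGroup.mk x) =
      (QuotientGroup.mk (natProj K L x).1, QuotientGroup.mk (natProj K L x).2))
    {x : K ∗ L} (hx : (x : (K ∗ L) ⧸ _) ∈ φbar.ker) :
    ∃ z ∈ iterComm K L 0, (z : (K ∗ L) ⧸ (⊤ : Subgroup (K ∗ L)).lowerCentralSeries c) = x := by
  rw [MonoidHom.mem_ker, hφbar, natProj_eq_toProd, Prod.mk_eq_one, QuotientGroup.eq_one_iff,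
    QuotientGroup.eq_one_iff] at hx
  set y := (inl (toProd x).1 * inr (toProd x).2 : K ∗ L)
  refine ⟨x * y⁻¹, ?_, QuotientGroup.eq.mpr ?_⟩
  · rw [← ker_toProd_eq_iterComm_zero, MonoidHom.mem_ker, map_mul, map_inv, mul_inv_eq_one]
    simp [y]
  · simpa [y] using mul_mem (Subgroup.map_mem_lowerCentralSeries (inl : K →* K ∗ L) hx.1)
      (Subgroup.map_mem_lowerCentralSeries (inr : L →* K ∗ L) hx.2)

end InducedMap

theorem ker_induced_map_iso_general (K L : Type*) [Group K] [Group L] (c : ℕ)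
    (φbar : (K ∗ L) ⧸ (⊤ : Subgroup (K ∗ L)).lowerCentralSeries c →*
        (K ⧸ (⊤ : Subgroup K).lowerCentralSeries c) × (L ⧸ (⊤ : Subgroup L).lowerCentralSeries c))
    (hφbar : ∀ x : K ∗ L,
      φbar (QuotientGroup.mk x) =
        (QuotientGroup.mk ((natProj K L) x).1, QuotientGroup.mk ((natProj K L) x).2)) :
    Nonempty
      (φbar.ker ≃*
        (iterComm K L 0) ⧸ ((iterComm K L (c - 1)).subgroupOf (iterComm K L 0))) := by
  have hmem : ∀ z : iterComm K L 0,
      (QuotientGroup.mk' _).domRestrict (iterComm K L 0) z ∈ φbar.ker := fun z =>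
    mk_mem_ker_of_mem_iterComm_zero hφbar z.2
  let ψ : iterComm K L 0 →* φbar.ker :=
    ((QuotientGroup.mk' _).domRestrict (iterComm K L 0)).codRestrict φbar.ker hmem
  have hψ : Function.Surjective ψ := by
    rintro ⟨q, hq⟩
    obtain ⟨x, rfl⟩ := QuotientGroup.mk_surjective q
    obtain ⟨z, hz, hzx⟩ := exists_mem_iterComm_zero_mk_eq hφbar hq
    exact ⟨⟨z, hz⟩, Subtype.ext hzx⟩
  have hker : ψ.ker = (iterComm K L (c - 1)).subgroupOf (iterComm K L 0) := by
    rw [MonoidHom.ker_codRestrict _ _ hmem, MonoidHom.ker_domRestrict, QuotientGroup.ker_mk',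
      Subgroup.subgroupOf_inj, inf_comm, iterComm_zero_inf_lowerCentralSeries,
      inf_of_le_left (iterComm_antitone K L (Nat.zero_le _))]
  exact ⟨((QuotientGroup.quotientMulEquivOfEq hker.symm).trans
    (QuotientGroup.quotientKerEquivOfSurjective ψ hψ)).symm⟩

/-- The kernel of the induced map
`φ̄_c : F/γ_{c+1}(F) →* (K/γ_{c+1}(K)) × (L/γ_{c+1}(L))` is isomorphic to
`[K,L]^F / [K,L,_{c-1}F]^F`. -/
theorem ker_induced_map_iso (K L : Type*) [Group K] [Group L] (c : ℕ) (hc : 1 ≤ c)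
    (φbar : (K ∗ L) ⧸ (⊤ : Subgroup (K ∗ L)).lowerCentralSeries c →*
        (K ⧸ (⊤ : Subgroup K).lowerCentralSeries c) × (L ⧸ (⊤ : Subgroup L).lowerCentralSeries c))
    (hφbar : ∀ x : K ∗ L,
      φbar (QuotientGroup.mk x) =
        (QuotientGroup.mk ((natProj K L) x).1, QuotientGroup.mk ((natProj K L) x).2)) :
    Nonempty
      (φbar.ker ≃*
        (iterComm K L 0) ⧸ ((iterComm K L (c - 1)).subgroupOf (iterComm K L 0))) :=
  ker_induced_map_iso_general K L c φbar hφbar
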